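/- Let A = !![a, b; c, 0] be a 2×2 integer matrix with b*c ≠ 0 and gcd(a, gcd(b, c)) = 1. Let K = ℚ(√(a² + 4*b*c)) with ring of integers O_K, and let n be a natural number and u, v, w nonzero integers with gcd(u, gcd(v, w)) = 1. Then the equation u•X^n + v•Y^n = w•Z^n has a solution X, Y, Z ∈ C(A) with det(X*Y*Z) ≠ 0 if and only if the equation u*x^n + v*y^n = w*z^n has a solution x, y, z ∈ O_K with x*y*z ≠ 0. -/

import Mathlib

/-!
A matrix commuting with `A = !![a, b; c, 0]` has its trace-free part proportional to the
primitive vector `(a, b, c)`, so the centralizer of `A` is `ℤ[A] = {p • 1 + q • A}`. The vector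
`(b, ℓ - a)`, with `ℓ = (a + r) / 2` a root of `X ^ 2 - a X - b c`, is an eigenvector of `A`, so
`p • 1 + q • A` acts on it by `p + q ℓ ∈ 𝓞_K`; this sends matrix solutions to solutions in `𝓞_K`,
and `det (p • 1 + q • A)` vanishes exactly when `p + q ℓ` or its conjugate does.

Conversely, the equation is homogeneous, so a solution in `K` can be scaled into `ℤ + ℤ ℓ`. If `r`
is irrational, `p + q ℓ` determines `(p, q)`, so the map `ℤ[A] → ℂ` is injective and the solution
lifts to `ℤ[A]`. If `r` is rational, `ℓ` is a rational algebraic integer, hence an integer, and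
scalar matrices already give a solution.
-/

open Matrix Polynomial

theorem Int.exists_mul_add_mul_add_mul_eq_one {a b c : ℤ} (h : Int.gcd a (Int.gcd b c) = 1) :
    ∃ α β γ : ℤ, a * α + b * β + c * γ = 1 := by
  obtain ⟨x, y, hxy⟩ := Int.isCoprime_iff_gcd_eq_one.2 h
  rw [Int.gcd_eq_gcd_ab b c] at hxy
  exact ⟨x, y * b.gcdA c, y * b.gcdB c, by linear_combination hxy⟩

section Eigenvector

variable {n R S : Type*} [Fintype n] [DecidableEq n] [CommRing R] [CommRing S]

theorem Matrix.commute_smul_one_add_smul (A : Matrix n n R) (p q : R) : Commute A (p • 1 + q • A) :=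
  ((Commute.one_right A).smul_right p).add_right ((Commute.refl A).smul_right q)

theorem Matrix.pow_mulVec_of_mulVec_eq_smul {M : Matrix n n R} {e : n → R} {μ : R}
    (h : M *ᵥ e = μ • e) (k : ℕ) : (M ^ k) *ᵥ e = μ ^ k • e := by
  induction k with
  | zero => simp
  | succ k ih =>
    rw [pow_succ, ← mulVec_mulVec, h, mulVec_smul, ih, smul_smul, pow_succ']

theorem Matrix.smul_one_add_smul_mulVec {A : Matrix n n R} {e : n → R} {ℓ : R}
    (h : A *ᵥ e = ℓ • e) (p q : R) : (p • 1 + q • A) *ᵥ e = (p + q * ℓ) • e := by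
  rw [add_mulVec, smul_mulVec, smul_mulVec, one_mulVec, h, smul_smul, add_smul]

theorem RingHom.mapMatrix_zsmul_pow_add_zsmul_pow_sub_zsmul_pow_mulVec (f : R →+* S)
    {X Y Z : Matrix n n R} {e : n → S} {x y z : S} (hX : f.mapMatrix X *ᵥ e = x • e)
    (hY : f.mapMatrix Y *ᵥ e = y • e) (hZ : f.mapMatrix Z *ᵥ e = z • e) (u v w : ℤ) (k : ℕ) :
    f.mapMatrix (u • X ^ k + v • Y ^ k - w • Z ^ k) *ᵥ e =
      (u • x ^ k + v • y ^ k - w • z ^ k) • e := by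
  simp only [map_sub, map_add, map_zsmul, map_pow, sub_mulVec, add_mulVec, smul_mulVec,
    pow_mulVec_of_mulVec_eq_smul hX, pow_mulVec_of_mulVec_eq_smul hY,
    pow_mulVec_of_mulVec_eq_smul hZ, sub_smul, add_smul, smul_assoc]

theorem Matrix.ne_zero_of_map_mulVec_eq_smul [IsDomain S] {f : R →+* S}
    (hf : Function.Injective f) {M : Matrix n n R} (hM : M.det ≠ 0) {e : n → S} (he : e ≠ 0)
    {μ : S} (h : f.mapMatrix M *ᵥ e = μ • e) : μ ≠ 0 := by
  rintro rfl
  refine hM (hf ?_)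
  rw [RingHom.map_det, map_zero, ← exists_mulVec_eq_zero_iff]
  exact ⟨e, he, by rw [h, zero_smul]⟩

theorem Matrix.zsmul_pow_add_zsmul_pow_eq_of_mulVec_eq_smul [IsDomain S] (f : R →+* S)
    {X Y Z : Matrix n n R} {e : n → S} (he : e ≠ 0) {x y z : S} (hX : f.mapMatrix X *ᵥ e = x • e)
    (hY : f.mapMatrix Y *ᵥ e = y • e) (hZ : f.mapMatrix Z *ᵥ e = z • e) {u v w : ℤ} {k : ℕ}
    (h : u • X ^ k + v • Y ^ k = w • Z ^ k) : u • x ^ k + v • y ^ k = w • z ^ k := by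
  have := congrArg (fun M => f.mapMatrix M *ᵥ e) (sub_eq_zero.2 h)
  simp only [f.mapMatrix_zsmul_pow_add_zsmul_pow_sub_zsmul_pow_mulVec hX hY hZ, map_zero,
    zero_mulVec] at this
  exact sub_eq_zero.1 ((smul_eq_zero.1 this).resolve_right he)

end Eigenvector

theorem Matrix.exists_scalar_commuting_solution {m R : Type*} [Fintype m] [DecidableEq m]
    [CommRing R] [IsDomain R] (A : Matrix m m R) {u v w : ℤ} {n : ℕ} {x y z : R}
    (hxyz : x * y * z ≠ 0) (h : u • x ^ n + v • y ^ n = w • z ^ n) :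
    ∃ X Y Z : Matrix m m R, Commute A X ∧ Commute A Y ∧ Commute A Z ∧ (X * Y * Z).det ≠ 0 ∧
      u • X ^ n + v • Y ^ n = w • Z ^ n := by
  refine ⟨x • 1, y • 1, z • 1, (Commute.one_right A).smul_right x,
    (Commute.one_right A).smul_right y, (Commute.one_right A).smul_right z, ?_, ?_⟩
  · simp only [smul_mul_smul_comm, det_smul, det_one, mul_one]
    exact pow_ne_zero _ hxyz
  · simp only [_root_.smul_pow, one_pow, ← smul_assoc, ← add_smul, h]

section TwoByTwo

variable {R : Type*} [CommRing R]

theorem Matrix.smul_one_add_smul_fin_two (p q a b c : R) :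
    p • 1 + q • !![a, b; c, 0] = !![p + q * a, q * b; q * c, p] := by
  ext i j
  fin_cases i <;> fin_cases j <;> simp

theorem Matrix.exists_eq_smul_one_add_smul_of_commute {a b c α β γ : R}
    (hbez : a * α + b * β + c * γ = 1) {M : Matrix (Fin 2) (Fin 2) R}
    (h : Commute !![a, b; c, 0] M) : ∃ p q : R, M = p • 1 + q • !![a, b; c, 0] := by
  have h' := h.eq
  rw [eta_fin_two M, mul_fin_two, mul_fin_two] at h'
  simp only [EmbeddingLike.apply_eq_iff_eq, vecCons_inj, and_true] at h'
  obtain ⟨⟨e₁, e₂⟩, e₃, -⟩ := h'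
  -- `e₁, e₂, e₃` say that `(M 0 0 - M 1 1, M 0 1, M 1 0)` is proportional to `(a, b, c)`;
  -- the Bezout relation recovers the factor.
  refine ⟨M 1 1, (M 0 0 - M 1 1) * α + M 0 1 * β + M 1 0 * γ, (eta_fin_two M).trans ?_⟩
  rw [smul_one_add_smul_fin_two]
  refine congrArg of (vec2_eq (vec2_eq ?_ ?_) (vec2_eq ?_ rfl))
  · linear_combination -(M 0 0 - M 1 1) * hbez - β * e₂ + γ * e₃
  · linear_combination -M 0 1 * hbez + α * e₂ - γ * e₁
  · linear_combination -M 1 0 * hbez - α * e₃ + β * e₁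

theorem Matrix.mulVec_eigenvector_fin_two {a b c ℓ : R} (hℓ : ℓ ^ 2 = a * ℓ + b * c) :
    !![a, b; c, 0] *ᵥ ![b, ℓ - a] = ℓ • ![b, ℓ - a] := by
  rw [cons_mulVec, cons_mulVec, empty_mulVec, vec2_dotProduct', vec2_dotProduct', smul_vec2,
    smul_eq_mul, smul_eq_mul]
  exact vec2_eq (by ring) (by linear_combination -hℓ)

theorem Matrix.det_smul_one_add_smul_fin_two {a b c ℓ : R} (hℓ : ℓ ^ 2 = a * ℓ + b * c)
    (p q : R) : (p • 1 + q • !![a, b; c, 0]).det = (p + q * ℓ) * (p + q * (a - ℓ)) := by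
  rw [smul_one_add_smul_fin_two, det_fin_two_of]
  linear_combination q ^ 2 * hℓ

theorem RingHom.mapMatrix_smul_one_add_smul {S : Type*} [CommRing S] (f : R →+* S)
    (p q a b c : R) :
    f.mapMatrix (p • 1 + q • !![a, b; c, 0]) = f p • 1 + f q • !![f a, f b; f c, 0] := by
  ext i j
  fin_cases i <;> fin_cases j <;> simp

end TwoByTwo

theorem Matrix.intCast_smul_one_add_smul_mulVec {S : Type*} [CommRing S] {a b c : ℤ} {ℓ : S}
    (hℓ : ℓ ^ 2 = a * ℓ + b * c) (p q : ℤ) :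
    (algebraMap ℤ S).mapMatrix (p • 1 + q • !![a, b; c, 0]) *ᵥ ![(b : S), ℓ - a] =
      (p + q * ℓ) • ![(b : S), ℓ - a] :=
  (algebraMap ℤ S).mapMatrix_smul_one_add_smul p q a b c ▸
    smul_one_add_smul_mulVec (mulVec_eigenvector_fin_two hℓ) _ _

theorem isIntegral_of_sq_eq {R S : Type*} [CommRing R] [CommRing S] [Algebra R S] {x : S}
    (a d : R) (h : x ^ 2 = algebraMap R S a * x + algebraMap R S d) : IsIntegral R x :=
  ⟨X ^ 2 - C a * X - C d, by monicity!, by simp [h]⟩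

theorem Rat.exists_int_eq_of_sq_eq {a d : ℤ} {ρ : ℚ} (h : ρ ^ 2 = a * ρ + d) : ∃ k : ℤ, ρ = k := by
  obtain ⟨k, hk⟩ := IsIntegrallyClosed.isIntegral_iff.1 (isIntegral_of_sq_eq (R := ℤ) a d h)
  exact ⟨k, by simpa using hk.symm⟩

section Quadratic

variable {K : Type*} [Field K] [CharZero K]

theorem exists_int_mul_eq_int_add_mul (ℓ : K) (s t : ℚ) :
    ∃ m : ℤ, m ≠ 0 ∧ ∃ p q : ℤ, m * (s + t * ℓ) = p + q * ℓ := by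
  refine ⟨s.den * t.den, by positivity, s.num * t.den, t.num * s.den, ?_⟩
  rw [Rat.cast_def s, Rat.cast_def t]
  push_cast
  field_simp

theorem eq_zero_and_eq_zero_of_intCast_add_mul_eq_zero {ℓ : K} (hirr : ∀ ρ : ℚ, ℓ ≠ ρ) {p q : ℤ}
    (h : (p : K) + q * ℓ = 0) : p = 0 ∧ q = 0 := by
  obtain rfl | hq := eq_or_ne q 0
  · simpa using h
  · refine absurd ?_ (hirr (-p / q))
    have : (q : K) ≠ 0 := by exact_mod_cast hq
    push_cast
    field_simp
    linear_combination h

variable {a b c u v w : ℤ} {n : ℕ} {ℓ : K}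

theorem exists_rat_add_mul_iff {r : K} {α β : ℚ} (hα : α ≠ 0) (h : r = α * ℓ + β) (x : K) :
    (∃ s t : ℚ, x = s + t * r) ↔ ∃ s t : ℚ, x = s + t * ℓ := by
  have : (α : K) ≠ 0 := by exact_mod_cast hα
  constructor
  · rintro ⟨s, t, rfl⟩
    exact ⟨s + t * β, t * α, by rw [h]; push_cast; ring⟩
  · rintro ⟨s, t, rfl⟩
    exact ⟨s - t * β / α, t / α, by rw [h]; push_cast; field_simp; ring⟩

theorem exists_int_solution_of_rat_solution {x y z : K} (hx : ∃ s t : ℚ, x = s + t * ℓ)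
    (hy : ∃ s t : ℚ, y = s + t * ℓ) (hz : ∃ s t : ℚ, z = s + t * ℓ) (hxyz : x * y * z ≠ 0)
    (h : u * x ^ n + v * y ^ n = w * z ^ n) :
    ∃ p₁ q₁ p₂ q₂ p₃ q₃ : ℤ, ((p₁ : K) + q₁ * ℓ) * (p₂ + q₂ * ℓ) * (p₃ + q₃ * ℓ) ≠ 0 ∧
      u * ((p₁ : K) + q₁ * ℓ) ^ n + v * ((p₂ : K) + q₂ * ℓ) ^ n =
        w * ((p₃ : K) + q₃ * ℓ) ^ n := by
  obtain ⟨s₁, t₁, rfl⟩ := hx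
  obtain ⟨s₂, t₂, rfl⟩ := hy
  obtain ⟨s₃, t₃, rfl⟩ := hz
  obtain ⟨m₁, hm₁, p₁, q₁, h₁⟩ := exists_int_mul_eq_int_add_mul ℓ s₁ t₁
  obtain ⟨m₂, hm₂, p₂, q₂, h₂⟩ := exists_int_mul_eq_int_add_mul ℓ s₂ t₂
  obtain ⟨m₃, hm₃, p₃, q₃, h₃⟩ := exists_int_mul_eq_int_add_mul ℓ s₃ t₃
  have scale : ∀ {m p q : ℤ} {x : K} (k : ℤ), m * x = p + q * ℓ →
      ((k * p : ℤ) : K) + (k * q : ℤ) * ℓ = (k * m : ℤ) * x := fun k h => by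
    push_cast; linear_combination k * h.symm
  refine ⟨m₂ * m₃ * p₁, m₂ * m₃ * q₁, m₁ * m₃ * p₂, m₁ * m₃ * q₂, m₁ * m₂ * p₃, m₁ * m₂ * q₃, ?_⟩
  rw [scale _ h₁, scale _ h₂, scale _ h₃]
  constructor
  · have : ((m₁ * m₂ * m₃ : ℤ) : K) ^ 3 ≠ 0 := by
      exact_mod_cast pow_ne_zero 3 (mul_ne_zero (mul_ne_zero hm₁ hm₂) hm₃)
    convert mul_ne_zero this hxyz using 1
    push_cast; ring
  · push_cast
    simp only [mul_pow]
    linear_combination ((m₁ * m₂ * m₃ : K)) ^ n * h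

theorem det_smul_one_add_smul_ne_zero (hℓ : ℓ ^ 2 = a * ℓ + b * c) (hirr : ∀ ρ : ℚ, ℓ ≠ ρ)
    {p q : ℤ} (h : (p : K) + q * ℓ ≠ 0) : (p • 1 + q • !![a, b; c, 0]).det ≠ 0 := by
  have hconj : (p : K) + q * (a - ℓ) ≠ 0 := fun h' => by
    obtain ⟨hp, hq⟩ := eq_zero_and_eq_zero_of_intCast_add_mul_eq_zero hirr
      (p := p + q * a) (q := -q) (by push_cast; linear_combination h')
    obtain rfl : q = 0 := neg_eq_zero.1 hq
    exact h (by simp_all)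
  intro h0
  have := congrArg (algebraMap ℤ K) h0
  rw [RingHom.map_det, RingHom.mapMatrix_smul_one_add_smul, map_zero] at this
  simp only [eq_intCast] at this
  exact mul_ne_zero h hconj ((det_smul_one_add_smul_fin_two hℓ _ _).symm.trans this)

theorem eq_zero_of_commute_of_mulVec_eq_zero {α β γ : ℤ} (hbez : a * α + b * β + c * γ = 1)
    (hb : b ≠ 0) (hℓ : ℓ ^ 2 = a * ℓ + b * c) (hirr : ∀ ρ : ℚ, ℓ ≠ ρ)
    {E : Matrix (Fin 2) (Fin 2) ℤ} (hE : Commute !![a, b; c, 0] E)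
    (h : (algebraMap ℤ K).mapMatrix E *ᵥ ![(b : K), ℓ - a] = 0) : E = 0 := by
  obtain ⟨p, q, rfl⟩ := exists_eq_smul_one_add_smul_of_commute hbez hE
  rw [intCast_smul_one_add_smul_mulVec hℓ] at h
  have he : ![(b : K), ℓ - a] ≠ 0 := fun h => hb (by simpa using congrFun h 0)
  obtain ⟨rfl, rfl⟩ :=
    eq_zero_and_eq_zero_of_intCast_add_mul_eq_zero hirr ((smul_eq_zero.1 h).resolve_right he)
  simp

theorem exists_commuting_solution_of_irrational {α β γ : ℤ} (hbez : a * α + b * β + c * γ = 1)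
    (hb : b ≠ 0) (hℓ : ℓ ^ 2 = a * ℓ + b * c) (hirr : ∀ ρ : ℚ, ℓ ≠ ρ) {p₁ q₁ p₂ q₂ p₃ q₃ : ℤ}
    (h0 : ((p₁ : K) + q₁ * ℓ) * (p₂ + q₂ * ℓ) * (p₃ + q₃ * ℓ) ≠ 0)
    (h : u * ((p₁ : K) + q₁ * ℓ) ^ n + v * ((p₂ : K) + q₂ * ℓ) ^ n =
      w * ((p₃ : K) + q₃ * ℓ) ^ n) :
    ∃ X Y Z : Matrix (Fin 2) (Fin 2) ℤ, Commute !![a, b; c, 0] X ∧ Commute !![a, b; c, 0] Y ∧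
      Commute !![a, b; c, 0] Z ∧ (X * Y * Z).det ≠ 0 ∧ u • X ^ n + v • Y ^ n = w • Z ^ n := by
  have hX := commute_smul_one_add_smul !![a, b; c, 0] p₁ q₁
  have hY := commute_smul_one_add_smul !![a, b; c, 0] p₂ q₂
  have hZ := commute_smul_one_add_smul !![a, b; c, 0] p₃ q₃
  refine ⟨_, _, _, hX, hY, hZ, ?_, ?_⟩
  · obtain ⟨⟨h₁, h₂⟩, h₃⟩ := (mul_ne_zero_iff.1 h0).imp_left mul_ne_zero_iff.1
    rw [det_mul, det_mul]
    exact mul_ne_zero (mul_ne_zero (det_smul_one_add_smul_ne_zero hℓ hirr h₁)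
      (det_smul_one_add_smul_ne_zero hℓ hirr h₂)) (det_smul_one_add_smul_ne_zero hℓ hirr h₃)
  · rw [← sub_eq_zero]
    refine eq_zero_of_commute_of_mulVec_eq_zero hbez hb hℓ hirr
      ((((hX.pow_right n).smul_right u).add_right ((hY.pow_right n).smul_right v)).sub_right
        ((hZ.pow_right n).smul_right w)) ?_
    rw [RingHom.mapMatrix_zsmul_pow_add_zsmul_pow_sub_zsmul_pow_mulVec _
      (intCast_smul_one_add_smul_mulVec hℓ p₁ q₁)
      (intCast_smul_one_add_smul_mulVec hℓ p₂ q₂) (intCast_smul_one_add_smul_mulVec hℓ p₃ q₃)]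
    simp [zsmul_eq_mul, h]

theorem exists_integral_solution_of_commuting_solution {α β γ : ℤ}
    (hbez : a * α + b * β + c * γ = 1) (hb : b ≠ 0) (hℓ : ℓ ^ 2 = a * ℓ + b * c) :
    (∃ X Y Z : Matrix (Fin 2) (Fin 2) ℤ, Commute !![a, b; c, 0] X ∧ Commute !![a, b; c, 0] Y ∧
      Commute !![a, b; c, 0] Z ∧ (X * Y * Z).det ≠ 0 ∧ u • X ^ n + v • Y ^ n = w • Z ^ n) →
    ∃ x y z : K, (IsIntegral ℤ x ∧ ∃ s t : ℚ, x = s + t * ℓ) ∧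
      (IsIntegral ℤ y ∧ ∃ s t : ℚ, y = s + t * ℓ) ∧ (IsIntegral ℤ z ∧ ∃ s t : ℚ, z = s + t * ℓ) ∧
      x * y * z ≠ 0 ∧ u * x ^ n + v * y ^ n = w * z ^ n := by
  rintro ⟨X, Y, Z, hX, hY, hZ, hdet, h⟩
  obtain ⟨p₁, q₁, rfl⟩ := exists_eq_smul_one_add_smul_of_commute hbez hX
  obtain ⟨p₂, q₂, rfl⟩ := exists_eq_smul_one_add_smul_of_commute hbez hY
  obtain ⟨p₃, q₃, rfl⟩ := exists_eq_smul_one_add_smul_of_commute hbez hZ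
  have hℓint : IsIntegral ℤ ℓ := isIntegral_of_sq_eq a (b * c) (by simpa using hℓ)
  have mem (p q : ℤ) : IsIntegral ℤ ((p : K) + q * ℓ) ∧ ∃ s t : ℚ, (p : K) + q * ℓ = s + t * ℓ :=
    ⟨isIntegral_algebraMap.add (isIntegral_algebraMap.mul hℓint), p, q, by push_cast; rfl⟩
  have he : ![(b : K), ℓ - a] ≠ 0 := fun h => hb (by simpa using congrFun h 0)
  have eig := intCast_smul_one_add_smul_mulVec hℓ
  have hne {p q : ℤ} (h : (p • 1 + q • !![a, b; c, 0]).det ≠ 0) : (p : K) + q * ℓ ≠ 0 :=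
    ne_zero_of_map_mulVec_eq_smul (algebraMap ℤ K).injective_int h he (eig p q)
  rw [det_mul, det_mul] at hdet
  obtain ⟨⟨h₁, h₂⟩, h₃⟩ := (mul_ne_zero_iff.1 hdet).imp_left mul_ne_zero_iff.1
  refine ⟨_, _, _, mem p₁ q₁, mem p₂ q₂, mem p₃ q₃, mul_ne_zero (mul_ne_zero (hne h₁) (hne h₂))
    (hne h₃), ?_⟩
  simpa only [zsmul_eq_mul] using
    zsmul_pow_add_zsmul_pow_eq_of_mulVec_eq_smul _ he (eig p₁ q₁) (eig p₂ q₂) (eig p₃ q₃) h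

theorem exists_commuting_solution_of_solution {α β γ : ℤ}
    (hbez : a * α + b * β + c * γ = 1) (hb : b ≠ 0) (hℓ : ℓ ^ 2 = a * ℓ + b * c) :
    (∃ x y z : K, (IsIntegral ℤ x ∧ ∃ s t : ℚ, x = s + t * ℓ) ∧
      (IsIntegral ℤ y ∧ ∃ s t : ℚ, y = s + t * ℓ) ∧ (IsIntegral ℤ z ∧ ∃ s t : ℚ, z = s + t * ℓ) ∧
      x * y * z ≠ 0 ∧ u * x ^ n + v * y ^ n = w * z ^ n) →
    ∃ X Y Z : Matrix (Fin 2) (Fin 2) ℤ, Commute !![a, b; c, 0] X ∧ Commute !![a, b; c, 0] Y ∧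
      Commute !![a, b; c, 0] Z ∧ (X * Y * Z).det ≠ 0 ∧ u • X ^ n + v • Y ^ n = w • Z ^ n := by
  rintro ⟨x, y, z, ⟨-, hx⟩, ⟨-, hy⟩, ⟨-, hz⟩, hxyz, h⟩
  obtain ⟨p₁, q₁, p₂, q₂, p₃, q₃, h0, h'⟩ := exists_int_solution_of_rat_solution hx hy hz hxyz h
  by_cases hrat : ∃ ρ : ℚ, ℓ = ρ
  · obtain ⟨ρ, rfl⟩ := hrat
    obtain ⟨k, rfl⟩ := Rat.exists_int_eq_of_sq_eq (a := a) (d := b * c) (by exact_mod_cast hℓ)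
    exact exists_scalar_commuting_solution _ (x := p₁ + q₁ * k) (y := p₂ + q₂ * k)
      (z := p₃ + q₃ * k) (by exact_mod_cast h0) (by exact_mod_cast h')
  · exact exists_commuting_solution_of_irrational hbez hb hℓ (fun ρ hρ => hrat ⟨ρ, hρ⟩) h0 h'

end Quadratic

theorem stmt_8_general (a b c u v w : ℤ) (hbc : b * c ≠ 0)
    (hgcd : Int.gcd a (Int.gcd b c) = 1)
    (n : ℕ) (r : ℂ) (hr : r ^ 2 = ((a ^ 2 + 4 * b * c : ℤ) : ℂ)) :
    (∃ X Y Z : Matrix (Fin 2) (Fin 2) ℤ,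
      !![a, b; c, 0] * X = X * !![a, b; c, 0] ∧
      !![a, b; c, 0] * Y = Y * !![a, b; c, 0] ∧
      !![a, b; c, 0] * Z = Z * !![a, b; c, 0] ∧
      (X * Y * Z).det ≠ 0 ∧
      u • X ^ n + v • Y ^ n = w • Z ^ n) ↔
    (∃ x y z : ℂ,
      (IsIntegral ℤ x ∧ ∃ s t : ℚ, x = (s : ℂ) + (t : ℂ) * r) ∧
      (IsIntegral ℤ y ∧ ∃ s t : ℚ, y = (s : ℂ) + (t : ℂ) * r) ∧
      (IsIntegral ℤ z ∧ ∃ s t : ℚ, z = (s : ℂ) + (t : ℂ) * r) ∧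
      x * y * z ≠ 0 ∧
      (u : ℂ) * x ^ n + (v : ℂ) * y ^ n = (w : ℂ) * z ^ n) := by
  obtain ⟨α, β, γ, hbez⟩ := Int.exists_mul_add_mul_add_mul_eq_one hgcd
  have hb : b ≠ 0 := left_ne_zero_of_mul hbc
  set ℓ : ℂ := (a + r) / 2
  have hℓ : ℓ ^ 2 = a * ℓ + b * c := by push_cast at hr; linear_combination hr / 4
  simp only [exists_rat_add_mul_iff (α := 2) (β := -a) two_ne_zero
    (show r = (2 : ℚ) * ℓ + (-a : ℚ) by push_cast; ring)]
  exact ⟨exists_integral_solution_of_commuting_solution hbez hb hℓ,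
    exists_commuting_solution_of_solution hbez hb hℓ⟩

theorem stmt_8 (a b c u v w : ℤ) (hbc : b * c ≠ 0)
    (hgcd : Int.gcd a (Int.gcd b c) = 1)
    (hu : u ≠ 0) (hv : v ≠ 0) (hw : w ≠ 0)
    (huvw : Int.gcd u (Int.gcd v w) = 1)
    (n : ℕ) (r : ℂ) (hr : r ^ 2 = ((a ^ 2 + 4 * b * c : ℤ) : ℂ)) :
    (∃ X Y Z : Matrix (Fin 2) (Fin 2) ℤ,
      !![a, b; c, 0] * X = X * !![a, b; c, 0] ∧
      !![a, b; c, 0] * Y = Y * !![a, b; c, 0] ∧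
      !![a, b; c, 0] * Z = Z * !![a, b; c, 0] ∧
      (X * Y * Z).det ≠ 0 ∧
      u • X ^ n + v • Y ^ n = w • Z ^ n) ↔
    (∃ x y z : ℂ,
      (IsIntegral ℤ x ∧ ∃ s t : ℚ, x = (s : ℂ) + (t : ℂ) * r) ∧
      (IsIntegral ℤ y ∧ ∃ s t : ℚ, y = (s : ℂ) + (t : ℂ) * r) ∧
      (IsIntegral ℤ z ∧ ∃ s t : ℚ, z = (s : ℂ) + (t : ℂ) * r) ∧
      x * y * z ≠ 0 ∧
      (u : ℂ) * x ^ n + (v : ℂ) * y ^ n = (w : ℂ) * z ^ n) :=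
  stmt_8_general a b c u v w hbc hgcd n r hr
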